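/- arXiv:2105.08479 — 5 statements merged into one kernel-verified Lean document; each statement's English description precedes it below -/
import Mathlib

section
/- Let (C, W) be a category with a class W of weak equivalences (containing all identities and satisfying 2-out-of-3). If W satisfies the 2-out-of-6 property and admits a left calculus of fractions, then W is saturated: any morphism of C that becomes an isomorphism in the localization C[W⁻¹] already belongs to W. -/
open CategoryTheory

universe v u

/-- If a class of weak equivalences (containing identities and satisfying 2-out-of-3)
satisfies 2-out-of-6 and admits a left calculus of fractions, then it is saturated:
every morphism inverted by the localization functor `C ⥤ C[W⁻¹]` belongs to `W`. -/
theorem saturated_of_twoOutOfSix_of_leftFractions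
    {C : Type u} [Category.{v} C] (W : MorphismProperty C)
    -- W contains all identities
    (hid : ∀ X : C, W (𝟙 X))
    -- 2-out-of-3
    (hcomp : ∀ ⦃X Y Z : C⦄ (f : X ⟶ Y) (g : Y ⟶ Z), W f → W g → W (f ≫ g))
    (hleft : ∀ ⦃X Y Z : C⦄ (f : X ⟶ Y) (g : Y ⟶ Z), W f → W (f ≫ g) → W g)
    (hright : ∀ ⦃X Y Z : C⦄ (f : X ⟶ Y) (g : Y ⟶ Z), W g → W (f ≫ g) → W f)
    -- 2-out-of-6
    (h26 : ∀ ⦃A B C' D : C⦄ (f : A ⟶ B) (g : B ⟶ C') (h : C' ⟶ D),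
      W (f ≫ g) → W (g ≫ h) → W f ∧ W g ∧ W h)
    -- left calculus of fractions, condition (i)
    (ore1 : ∀ ⦃Y Z X : C⦄ (f : Y ⟶ Z) (g : Y ⟶ X), W f →
      ∃ (P : C) (F : X ⟶ P) (G : Z ⟶ P), W F ∧ g ≫ F = f ≫ G)
    -- left calculus of fractions, condition (ii)
    (ore2 : ∀ ⦃Z X Y : C⦄ (f g : Z ⟶ X) (h : Y ⟶ Z), W h → h ≫ f = h ≫ g →
      ∃ (X' : C) (ρ : X ⟶ X'), W ρ ∧ f ≫ ρ = g ≫ ρ)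
    -- conclusion: saturation
    {X Y : C} (f : X ⟶ Y) (hf : IsIso (W.Q.map f)) : W f := by
  haveI : W.ContainsIdentities := ⟨hid⟩
  haveI : W.IsStableUnderComposition := ⟨fun f g hf hg => hcomp f g hf hg⟩
  haveI : W.HasLeftCalculusOfFractions :=
    { exists_leftFraction := fun X' Y' φ => by
        obtain ⟨P, F, G, hF, hcommu⟩ := ore1 φ.s φ.f φ.hs
        exact ⟨MorphismProperty.LeftFraction.mk G F hF, hcommu⟩
      ext := fun X' X'' Y' f₁ f₂ s hs hfac => by
        obtain ⟨Z', ρ, hρ, h⟩ := ore2 f₁ f₂ s hs hfac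
        exact ⟨Z', ρ, hρ, h⟩ }
  have key : ∀ {A B : C} (u : A ⟶ B), IsIso (W.Q.map u) →
      ∃ (Z : C) (v : B ⟶ Z), W (u ≫ v) := by
    intro A B u hu
    obtain ⟨φ, hφ⟩ := Localization.exists_leftFraction W.Q W (inv (W.Q.map u))
    have h1 : W.Q.map u ≫ φ.map W.Q (Localization.inverts W.Q W) = 𝟙 _ := by
      rw [← hφ, IsIso.hom_inv_id]
    have h2 : W.Q.map (u ≫ φ.f) = W.Q.map φ.s := by
      have := congrArg (· ≫ W.Q.map φ.s) h1
      simpa [Category.assoc] using this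
    rw [MorphismProperty.map_eq_iff_postcomp W.Q W] at h2
    obtain ⟨Z, s, hs, fac⟩ := h2
    refine ⟨Z, φ.f ≫ s, ?_⟩
    rw [← Category.assoc, fac]
    exact hcomp _ _ φ.hs hs
  obtain ⟨Z, b, hb⟩ := key f hf
  have hQb : IsIso (W.Q.map b) := by
    have h1 : IsIso (W.Q.map (f ≫ b)) := Localization.inverts W.Q W _ hb
    rw [Functor.map_comp] at h1
    exact IsIso.of_isIso_comp_left (W.Q.map f) (W.Q.map b)
  obtain ⟨Z', c, hc⟩ := key b hQb
  exact (h26 f b c hb hc).1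
end

section
/- Let W be a basic localizer on Cat and let f, g: I → J be functors between small categories. If there exists a natural transformation μ: f ⟹ g, then f ∈ W if and only if g ∈ W. Consequently, W is invariant under the homotopy relation generated by the existence of natural transformations. -/
open CategoryTheory CategoryTheory.Limits

universe u

/-- A class of morphisms is weakly saturated if it contains identities,
satisfies 2-out-of-3, and satisfies (WS3). -/
structure IsWeaklySaturated {C : Type*} [Category C] (W : MorphismProperty C) : Prop where
  id_mem : ∀ X : C, W (𝟙 X)
  comp_mem : ∀ ⦃X Y Z : C⦄ (f : X ⟶ Y) (g : Y ⟶ Z), W f → W g → W (f ≫ g)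
  of_comp_left : ∀ ⦃X Y Z : C⦄ (f : X ⟶ Y) (g : Y ⟶ Z), W f → W (f ≫ g) → W g
  of_comp_right : ∀ ⦃X Y Z : C⦄ (f : X ⟶ Y) (g : Y ⟶ Z), W g → W (f ≫ g) → W f
  ws3 : ∀ ⦃X Y : C⦄ (p : Y ⟶ X) (s : X ⟶ Y), s ≫ p = 𝟙 X → W (p ≫ s) → W p

/-- The terminal category, as an object of `Cat`. -/
abbrev Cat.pt : Cat.{u, u} := Cat.of (Discrete PUnit.{u + 1})

/-- A basic localizer (Grothendieck's « localisateur fondamental ») on `Cat`: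
(L1) weak saturation, (L2) categories with a terminal object are aspherical,
(L3) locality over a base via comma categories. -/
structure IsBasicLocalizer (W : MorphismProperty Cat.{u, u}) : Prop where
  weaklySaturated : IsWeaklySaturated W
  terminal : ∀ (I : Cat.{u, u}) [HasTerminal I],
    W (X := I) (Y := Cat.pt.{u}) (Functor.star I).toCatHom
  locality : ∀ ⦃I J K : Cat.{u, u}⦄ (w : I ⟶ J) (v : J ⟶ K),
    (∀ k : K,
      W (X := Cat.of (Comma (w.toFunctor ⋙ v.toFunctor) (Functor.fromPUnit.{u} k)))
        (Y := Cat.of (Comma v.toFunctor (Functor.fromPUnit.{u} k)))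
        (Comma.preLeft w.toFunctor v.toFunctor (Functor.fromPUnit.{u} k)).toCatHom) →
    W w

/-!
The transformation `μ` is a functor `H : [1] × I ⥤ J` restricting to `f` and `g` on the two ends.
The projection `[1] × I ⥤ I` has the right adjoint `i ↦ (1, i)`, and every left adjoint
`F : I ⥤ J` lies in `W`: by (L3) over `J` it suffices that each `I/j ⥤ J/j` lies in `W`, and both
comma categories have terminal objects, so (L2) and 2-out-of-3 apply. Hence both end inclusions
`I ⥤ [1] × I`, being sections of the projection, lie in `W`, and `f ∈ W ↔ H ∈ W ↔ g ∈ W`.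
-/

universe w

/-- Mathlib's `CostructuredArrow F d` is this comma category with `PUnit.{1}` in place of `PUnit.{w+1}`. -/
lemma CategoryTheory.hasTerminal_comma_fromPUnit_of_isLeftAdjoint {C D : Type*} [Category C] [Category D]
    (F : C ⥤ D) [F.IsLeftAdjoint] (d : D) :
    HasTerminal (Comma F (Functor.fromPUnit.{w} d)) := by
  have : HasTerminal (Comma F (Functor.fromPUnit.{0} d)) :=
    isLeftAdjoint_iff_hasTerminal_costructuredArrow.mp inferInstance d
  let e := Discrete.equivalence Equiv.punitEquivPUnit.{w + 1, 1}
  have := Comma.isEquivalence_preRight e.functor (Functor.fromPUnit.{0} d) F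
  exact hasTerminal_of_equivalence (Comma.preRight F e.functor (Functor.fromPUnit.{0} d))

noncomputable def CategoryTheory.Prod.sndAdjunction (C D : Type*) [Category C] [Category D]
    [HasTerminal C] :
    Prod.snd C D ⊣ Functor.prod' ((Functor.const D).obj (⊤_ C)) (𝟭 D) :=
  Adjunction.mkOfHomEquiv
    { homEquiv X d :=
        { toFun f := (terminal.from X.1, f)
          invFun f := f.2
          left_inv _ := rfl
          right_inv _ := Prod.ext (terminal.hom_ext _ _) rfl } }

instance CategoryTheory.Prod.isLeftAdjoint_snd (C D : Type*) [Category C] [Category D]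
    [HasTerminal C] : (Prod.snd C D).IsLeftAdjoint :=
  (Prod.sndAdjunction C D).isLeftAdjoint

lemma CategoryTheory.Functor.prod'_const_comp_uncurry {B C D : Type*} [Category B] [Category C] [Category D]
    (F : B ⥤ C ⥤ D) (b : B) :
    Functor.prod' ((Functor.const C).obj b) (𝟭 C) ⋙ Functor.uncurry.obj F = F.obj b :=
  congrArg (·.obj b) (Functor.curry_obj_uncurry_obj F)

namespace IsBasicLocalizer

variable {W : MorphismProperty Cat.{u, u}}

lemma comp_mem_iff (hW : IsBasicLocalizer W) {I J K : Cat.{u, u}} {s : I ⟶ J} (hs : W s)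
    (h : J ⟶ K) : W (s ≫ h) ↔ W h :=
  ⟨hW.weaklySaturated.of_comp_left s h hs, hW.weaklySaturated.comp_mem s h hs⟩

lemma mem_of_hasTerminal (hW : IsBasicLocalizer W) {I J : Type u} [Category.{u} I]
    [Category.{u} J] [HasTerminal I] [HasTerminal J] (F : I ⥤ J) :
    W (X := Cat.of I) (Y := Cat.of J) F.toCatHom := by
  have hcomp : F.toCatHom ≫ (Functor.star J).toCatHom = (Functor.star I).toCatHom :=
    Cat.ext (Functor.punit_ext' _ _)
  have : HasTerminal (Cat.of I) := ‹HasTerminal I›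
  have : HasTerminal (Cat.of J) := ‹HasTerminal J›
  exact hW.weaklySaturated.of_comp_right _ _ (hW.terminal (Cat.of J)) (hcomp ▸ hW.terminal _)

lemma mem_of_isLeftAdjoint (hW : IsBasicLocalizer W) {I J : Type u} [Category.{u} I]
    [Category.{u} J] (F : I ⥤ J) [F.IsLeftAdjoint] :
    W (X := Cat.of I) (Y := Cat.of J) F.toCatHom := by
  refine hW.locality _ (𝟙 (Cat.of J)) fun j => ?_
  have := hasTerminal_comma_fromPUnit_of_isLeftAdjoint.{u} (F ⋙ 𝟭 J) j
  have := hasTerminal_comma_fromPUnit_of_isLeftAdjoint.{u} (𝟭 J) j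
  exact hW.mem_of_hasTerminal (Comma.preLeft F (𝟭 J) (Functor.fromPUnit.{u} j))

lemma mem_prod'_const (hW : IsBasicLocalizer W) {C : Type u} [Category.{u} C] [HasTerminal C]
    (I : Cat.{u, u}) (c : C) :
    W (X := I) (Y := Cat.of (C × I)) (Functor.prod' ((Functor.const I).obj c) (𝟭 I)).toCatHom :=
  hW.weaklySaturated.of_comp_right _ (CategoryTheory.Prod.snd C I).toCatHom
    (hW.mem_of_isLeftAdjoint (CategoryTheory.Prod.snd C I)) (hW.weaklySaturated.id_mem I)

lemma mem_obj_iff_mem_obj (hW : IsBasicLocalizer W) {C : Type u} [Category.{u} C] [HasTerminal C]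
    {I J : Cat.{u, u}} (F : C ⥤ I ⥤ J) (c c' : C) :
    W (F.obj c).toCatHom ↔ W (F.obj c').toCatHom := by
  have key (c : C) : W (F.obj c).toCatHom ↔ W (Functor.uncurry.obj F).toCatHom := by
    rw [← Functor.prod'_const_comp_uncurry F c]
    exact hW.comp_mem_iff (hW.mem_prod'_const I c) (Functor.uncurry.obj F).toCatHom
  rw [key, key]

end IsBasicLocalizer

/-- Functors connected by a natural transformation are simultaneously in any basic
localizer: if `μ : f ⟹ g` exists, then `f ∈ W ↔ g ∈ W`. -/
theorem IsBasicLocalizer.mem_iff_of_natTrans {W : MorphismProperty Cat.{u, u}}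
    (hW : IsBasicLocalizer W) {I J : Cat.{u, u}} (f g : I ⟶ J)
    (μ : f.toFunctor ⟶ g.toFunctor) : W f ↔ W g :=
  hW.mem_obj_iff_mem_obj ((ULift.orderIso.{u} (α := Fin 2)).equivalence.functor ⋙
    ComposableArrows.mk₁ μ) ⟨0⟩ ⟨1⟩
end

section
/- Let W be a basic localizer on Cat. If f: I₁ → I₂ is a functor in W and E is any small category, then the functor f × id_E : I₁ × E → I₂ × E is in W. -/
open CategoryTheory CategoryTheory.Limits

universe u

/-! Locality (L3) over `E` reduces the claim to the comma categories over each `e : E`, and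
these are `I × Over e`; so it suffices to treat the case where `E` has a terminal object. Then the
projection `I × E ⥤ I` is in `W`, again by locality, now over `I`: its comma categories have
terminal objects, hence are aspherical by (L2). Two-out-of-three then concludes. -/

lemma IsWeaklySaturated.mem_of_isIso {C : Type*} [Category C] {W : MorphismProperty C}
    (hW : IsWeaklySaturated W) {X Y : C} (g : X ⟶ Y) [IsIso g] : W g :=
  hW.ws3 g (inv g) (IsIso.inv_hom_id g) (by rw [IsIso.hom_inv_id]; exact hW.id_mem X)

lemma IsWeaklySaturated.respectsIso {C : Type*} [Category C] {W : MorphismProperty C}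
    (hW : IsWeaklySaturated W) : W.RespectsIso where
  precomp i (_ : IsIso i) f hf := hW.comp_mem i f (hW.mem_of_isIso i) hf
  postcomp i (_ : IsIso i) f hf := hW.comp_mem f i hf (hW.mem_of_isIso i)

lemma IsBasicLocalizer.mem_of_hasTerminal_s5 {W : MorphismProperty Cat.{u, u}}
    (hW : IsBasicLocalizer W) {X Y : Cat.{u, u}} [HasTerminal X] [HasTerminal Y]
    (g : X ⟶ Y) : W g := by
  refine hW.weaklySaturated.of_comp_right g (Functor.star Y).toCatHom (hW.terminal Y) ?_
  have star_comp :
      (g ≫ (Functor.star Y).toCatHom : X ⟶ Cat.pt.{u}) = (Functor.star X).toCatHom :=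
    Cat.Hom.ext (Functor.punit_ext' _ _)
  rw [star_comp]
  exact hW.terminal X

section CommaTerminal

variable {A : Type u} [Category.{u} A] (a : A)

def commaIdIsTerminal :
    IsTerminal (⟨a, ⟨⟨⟩⟩, 𝟙 a⟩ : Comma (𝟭 A) (Functor.fromPUnit.{u} a)) :=
  IsTerminal.ofUniqueHom (fun X => ⟨X.hom, 𝟙 _, by simp⟩) fun X m =>
    CommaMorphism.ext (by simpa using m.w) (Subsingleton.elim _ _)

noncomputable def commaProdFstIsTerminal (C : Type u) [Category.{u} C] [HasTerminal C] :
    IsTerminal (⟨(a, ⊤_ C), ⟨⟨⟩⟩, 𝟙 a⟩ :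
      Comma (CategoryTheory.Prod.fst A C) (Functor.fromPUnit.{u} a)) :=
  IsTerminal.ofUniqueHom (fun X => ⟨(X.hom, terminal.from X.left.2), 𝟙 _, by simp⟩)
    fun X m => CommaMorphism.ext (Prod.ext (by simpa using m.w) (terminal.hom_ext _ _))
      (Subsingleton.elim _ _)

end CommaTerminal

lemma IsBasicLocalizer.prodFst_mem {W : MorphismProperty Cat.{u, u}}
    (hW : IsBasicLocalizer W) (A C : Cat.{u, u}) [HasTerminal C] :
    W (X := Cat.of (A × C)) (Y := A) (CategoryTheory.Prod.fst A C).toCatHom := by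
  refine hW.locality (K := A) (CategoryTheory.Prod.fst A C).toCatHom (𝟙 A) fun a => ?_
  exact @IsBasicLocalizer.mem_of_hasTerminal_s5 _ hW _ _ (commaProdFstIsTerminal a C).hasTerminal
    (commaIdIsTerminal a).hasTerminal _

lemma IsBasicLocalizer.prod_mem_of_hasTerminal {W : MorphismProperty Cat.{u, u}}
    (hW : IsBasicLocalizer W) {A B : Cat.{u, u}} (g : A ⟶ B) (hg : W g)
    (C : Cat.{u, u}) [HasTerminal C] :
    W (X := Cat.of (A × C)) (Y := Cat.of (B × C)) (g.toFunctor.prod (𝟭 C)).toCatHom :=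
  hW.weaklySaturated.of_comp_right (Z := B) _ (CategoryTheory.Prod.fst B C).toCatHom
    (hW.prodFst_mem B C)
    (hW.weaklySaturated.comp_mem (Y := A) _ g (hW.prodFst_mem A C) hg)

section CommaProdSnd

variable (B : Type u) [Category.{u} B] {E : Type u} [Category.{u} E] (e : E)

def commaProdSndToProdOver :
    Comma (CategoryTheory.Prod.snd B E) (Functor.fromPUnit.{u} e) ⥤ B × Over e where
  obj X := (X.left.1, Over.mk X.hom)
  map φ := (φ.left.1, Over.homMk φ.left.2 (by simpa using φ.w))

def prodOverToCommaProdSnd :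
    B × Over e ⥤ Comma (CategoryTheory.Prod.snd B E) (Functor.fromPUnit.{u} e) where
  obj X := ⟨(X.1, X.2.left), ⟨⟨⟩⟩, X.2.hom⟩
  map φ := ⟨(φ.1, φ.2.left), 𝟙 _, by simp⟩

def commaProdSndIsoProdOver :
    Cat.of (Comma (CategoryTheory.Prod.snd B E) (Functor.fromPUnit.{u} e)) ≅
      Cat.of (B × Over e) where
  hom := (commaProdSndToProdOver B e).toCatHom
  inv := (prodOverToCommaProdSnd B e).toCatHom

end CommaProdSnd

/-- A basic localizer is stable under taking products with a fixed category:
if `f : I₁ ⟶ I₂` is in `W` and `E` is any small category, then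
`f × id_E : I₁ × E ⟶ I₂ × E` is in `W`. -/
theorem IsBasicLocalizer.prod_mem {W : MorphismProperty Cat.{u, u}}
    (hW : IsBasicLocalizer W) {I₁ I₂ : Cat.{u, u}} (f : I₁ ⟶ I₂) (hf : W f)
    (E : Cat.{u, u}) :
    W (X := Cat.of (↥I₁ × ↥E)) (Y := Cat.of (↥I₂ × ↥E))
      (Functor.prod f.toFunctor (𝟭 ↥E)).toCatHom := by
  refine hW.locality (K := E) _ (CategoryTheory.Prod.snd I₂ E).toCatHom fun e => ?_
  have := hW.weaklySaturated.respectsIso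
  refine (W.arrow_mk_iso_iff (g := (f.toFunctor.prod (𝟭 (Over e))).toCatHom)
    (Arrow.isoMk (commaProdSndIsoProdOver I₁ e) (commaProdSndIsoProdOver I₂ e) rfl)).2 ?_
  have : HasTerminal (Cat.of (Over e)) := inferInstanceAs (HasTerminal (Over e))
  exact hW.prod_mem_of_hasTerminal f hf (Cat.of (Over e))
end

section
/- Let C be a category with weak equivalences W admitting a left calculus of fractions and satisfying 2-out-of-6, and let f: X → Y be a morphism of C. If there exists a morphism represented by a left fraction (g: Y → Z, w: X → Z with w ∈ W) which is a two-sided inverse of f in the localization C[W⁻¹], then g∘f ∈ W and f ∈ W. -/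
open CategoryTheory

universe v u

/-- Given a left fraction `(g : Y ⟶ Z, w : X ⟶ Z)` with `w ∈ W`, the morphism
`Q(g) ≫ Q(w)⁻¹ : Y ⟶ X` it represents in the localization `C[W⁻¹]`. -/
noncomputable def leftFractionMap {C : Type u} [Category.{v} C] (W : MorphismProperty C)
    {X Y Z : C} (g : Y ⟶ Z) (w : X ⟶ Z) (hw : W w) :
    W.Q.obj Y ⟶ W.Q.obj X :=
  W.Q.map g ≫ @CategoryTheory.inv _ _ _ _ (W.Q.map w) (Localization.inverts W.Q W w hw)

/-- If the left fraction `(g : Y ⟶ Z, w : X ⟶ Z)` (with `w ∈ W`) is a two-sided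
inverse of `f` in the localization `C[W⁻¹]`, then `g ∘ f ∈ W` and `f ∈ W`,
provided `W` contains identities, satisfies 2-out-of-3 and 2-out-of-6, and admits
a left calculus of fractions. -/
theorem mem_of_leftFraction_inverse
    {C : Type u} [Category.{v} C] (W : MorphismProperty C)
    (hid : ∀ X : C, W (𝟙 X))
    (hcomp : ∀ ⦃X Y Z : C⦄ (f : X ⟶ Y) (g : Y ⟶ Z), W f → W g → W (f ≫ g))
    (hleft : ∀ ⦃X Y Z : C⦄ (f : X ⟶ Y) (g : Y ⟶ Z), W f → W (f ≫ g) → W g)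
    (hright : ∀ ⦃X Y Z : C⦄ (f : X ⟶ Y) (g : Y ⟶ Z), W g → W (f ≫ g) → W f)
    (h26 : ∀ ⦃A B C' D : C⦄ (f : A ⟶ B) (g : B ⟶ C') (h : C' ⟶ D),
      W (f ≫ g) → W (g ≫ h) → W f ∧ W g ∧ W h)
    (ore1 : ∀ ⦃Y Z X : C⦄ (f : Y ⟶ Z) (g : Y ⟶ X), W f →
      ∃ (P : C) (F : X ⟶ P) (G : Z ⟶ P), W F ∧ g ≫ F = f ≫ G)
    (ore2 : ∀ ⦃Z X Y : C⦄ (f g : Z ⟶ X) (h : Y ⟶ Z), W h → h ≫ f = h ≫ g →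
      ∃ (X' : C) (ρ : X ⟶ X'), W ρ ∧ f ≫ ρ = g ≫ ρ)
    {X Y Z : C} (f : X ⟶ Y) (g : Y ⟶ Z) (w : X ⟶ Z) (hw : W w)
    (hinv₁ : W.Q.map f ≫ leftFractionMap W g w hw = 𝟙 (W.Q.obj X))
    (hinv₂ : leftFractionMap W g w hw ≫ W.Q.map f = 𝟙 (W.Q.obj Y)) :
    W (f ≫ g) ∧ W f := by
  haveI : W.ContainsIdentities := ⟨hid⟩
  haveI : W.IsMultiplicative :=
    { comp_mem := fun f g hf hg => hcomp f g hf hg }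
  haveI : W.HasLeftCalculusOfFractions :=
    { exists_leftFraction := fun X Y φ => by
        obtain ⟨P, F, G, hF, hsq⟩ := ore1 φ.s φ.f φ.hs
        exact ⟨MorphismProperty.LeftFraction.mk G F hF, hsq⟩
      ext := fun X' X Y f₁ f₂ s hs h => by
        obtain ⟨Y', ρ, hρ, hfac⟩ := ore2 f₁ f₂ s hs h
        exact ⟨Y', ρ, hρ, hfac⟩ }
  haveI := Localization.inverts W.Q W w hw
  -- From hinv₁ : Q (f ≫ g) = Q w
  have h1 : W.Q.map (f ≫ g) = W.Q.map w := by
    have h := hinv₁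
    simp only [leftFractionMap, ← Category.assoc] at h
    rw [IsIso.comp_inv_eq, Category.id_comp] at h
    rw [W.Q.map_comp, h]
  obtain ⟨Z₁, s, hs, hfac⟩ := (MorphismProperty.map_eq_iff_postcomp W.Q W _ _).1 h1
  have hfg : W (f ≫ g) := by
    refine hright (f ≫ g) s hs ?_
    rw [hfac]
    exact hcomp w s hw hs
  refine ⟨hfg, ?_⟩
  -- complete the square : f ≫ F = w ≫ G with F ∈ W
  obtain ⟨P, F, G, hF, hsq⟩ := ore1 w f hw
  -- show Q (g ≫ G) = Q F
  have h2 : W.Q.map (g ≫ G) = W.Q.map F := by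
    have hQ : W.Q.map f ≫ W.Q.map F = W.Q.map w ≫ W.Q.map G := by
      rw [← W.Q.map_comp, ← W.Q.map_comp, hsq]
    have h := hinv₂
    simp only [leftFractionMap, Category.assoc] at h
    calc W.Q.map (g ≫ G)
        = W.Q.map g ≫ W.Q.map G := W.Q.map_comp _ _
      _ = W.Q.map g ≫ (inv (W.Q.map w) ≫ W.Q.map w) ≫ W.Q.map G := by
          rw [IsIso.inv_hom_id, Category.id_comp]
      _ = W.Q.map g ≫ inv (W.Q.map w) ≫ W.Q.map f ≫ W.Q.map F := by
          simp only [Category.assoc, hQ]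
      _ = (W.Q.map g ≫ inv (W.Q.map w) ≫ W.Q.map f) ≫ W.Q.map F := by
          simp only [Category.assoc]
      _ = W.Q.map F := by rw [h, Category.id_comp]
  obtain ⟨Z₂, t, ht, hfac₂⟩ := (MorphismProperty.map_eq_iff_postcomp W.Q W _ _).1 h2
  have hgGt : W (g ≫ (G ≫ t)) := by
    have : (g ≫ G) ≫ t = g ≫ (G ≫ t) := Category.assoc _ _ _
    rw [← this, hfac₂]
    exact hcomp F t hF ht
  exact (h26 f g (G ≫ t) hfg hgGt).1
end

section
/- Let W be a basic localizer on Cat. Then the image of W in Cat has a left calculus of fractions up to natural isomorphism; in particular, for any f: Y → Z in W and g: Y → X arbitrary, there exist a small category P, functors F: X → P with F ∈ W and G: Z → P, together with a zig-zag of natural transformations connecting F∘g and G∘f (so that F∘g = G∘f in the category obtained from Cat by identifying naturally-transformation-connected functors). -/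
open CategoryTheory CategoryTheory.Limits

universe u

/-- Two parallel functors are "naturally connected" if they are related by a zig-zag
of natural transformations. -/
def NatConnected {I J : Cat.{u, u}} (a b : I ⟶ J) : Prop :=
  Relation.EqvGen (fun p q : ↥I ⥤ ↥J => Nonempty (p ⟶ q)) a.toFunctor b.toFunctor

/-!
Take for `P` the Grothendieck construction of the span `X ⟵ Y ⟶ Z` (of `g` and `f`), for `F`
and `G` its fibre inclusions; the fibre inclusion of `Y` maps naturally to both `F ∘ g` and
`G ∘ f`.

To see `F ∈ W`, factor it through the mapping cylinder of `g`. The inclusion `X → Cyl g` is in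
`W` because the collapse `Cyl g → X` is a left adjoint (hence in `W` by (L2) and (L3)) and a
retraction of it. The embedding `Cyl g → P` is in `W` by (L3) over the shape of the span: over
the apex and over `X` the two slices agree, and over `Z` the comparison of slices is, up to
equivalences, the inclusion `Y → Cyl f`, which is in `W` because its composite with the
collapse `Cyl f → Z` is `f`.
-/

namespace IsBasicLocalizer

variable {W : MorphismProperty Cat.{u, u}} {A B : Type u} [Category.{u} A] [Category.{u} B]

theorem mem_of_hasTerminal_s13 (hW : IsBasicLocalizer W) [HasTerminal A] [HasTerminal B]
    (F : A ⥤ B) : W F.toCatHom := by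
  have hstar : F.toCatHom ≫ (Functor.star B).toCatHom = (Functor.star A).toCatHom :=
    Cat.ext (Functor.punit_ext' _ _)
  exact hW.weaklySaturated.of_comp_right _ _ (@terminal _ hW (Cat.of B) ‹_›)
    (hstar ▸ @terminal _ hW (Cat.of A) ‹_›)

/-- The slices in the locality axiom are taken over `Discrete PUnit.{u + 1}`, whereas
`CostructuredArrow` uses `Discrete PUnit.{1}`. -/
theorem hasTerminal_comma_fromPUnit (F : A ⥤ B) (b : B)
    (h : HasTerminal (CostructuredArrow F b)) :
    HasTerminal (Comma F (Functor.fromPUnit.{u} b)) :=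
  @Adjunction.hasLimitsOfShape_of_equivalence _ _ _ _ _ _
    (Comma.preRight F (Discrete.equivalence Equiv.punitEquivPUnit.{u + 1, 1}).functor
      (Functor.fromPUnit.{0} b))
    (Comma.isEquivalence_preRight _ _ _) h

theorem mem_of_hasTerminal_costructuredArrow (hW : IsBasicLocalizer W) (F : A ⥤ B)
    [hF : ∀ b, HasTerminal (CostructuredArrow F b)] : W F.toCatHom :=
  hW.locality F.toCatHom (𝟭 B).toCatHom fun (b : B) =>
    have := hasTerminal_comma_fromPUnit (F ⋙ 𝟭 B) b (hF b)
    have := hasTerminal_comma_fromPUnit (𝟭 B) b CostructuredArrow.mkIdTerminal.hasTerminal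
    hW.mem_of_hasTerminal_s13 (Comma.preLeft F (𝟭 B) (Functor.fromPUnit.{u} b))

theorem mem_of_isLeftAdjoint_s13 (hW : IsBasicLocalizer W) (F : A ⥤ B) [F.IsLeftAdjoint] :
    W F.toCatHom :=
  have := isLeftAdjoint_iff_hasTerminal_costructuredArrow.mp ‹F.IsLeftAdjoint›
  hW.mem_of_hasTerminal_costructuredArrow F

theorem mem_of_isEquivalence (hW : IsBasicLocalizer W) (F : A ⥤ B) [F.IsEquivalence] :
    W F.toCatHom :=
  hW.mem_of_isLeftAdjoint_s13 F

end IsBasicLocalizer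

theorem Bool.not_hom_true_false (φ : (true : Bool) ⟶ false) : False :=
  nomatch φ.le

namespace MappingCyl

abbrev diagram {A B : Cat.{u, u}} (h : A ⟶ B) : Bool ⥤ Cat.{u, u} where
  obj
    | false => A
    | true => B
  map {a b} φ :=
    match a, b, φ with
    | false, false, _ => 𝟙 A
    | true, true, _ => 𝟙 B
    | false, true, _ => h
    | true, false, φ => (Bool.not_hom_true_false φ).elim
  map_id a := by cases a <;> rfl
  map_comp {a b c} φ ψ := by
    cases a <;> cases b <;> cases c <;>
      first
        | rfl
        | exact (Bool.not_hom_true_false φ).elim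
        | exact (Bool.not_hom_true_false ψ).elim

end MappingCyl

abbrev MappingCyl {A B : Cat.{u, u}} (h : A ⟶ B) : Type u :=
  Grothendieck (MappingCyl.diagram h)

namespace MappingCyl

variable {A B : Cat.{u, u}} (h : A ⟶ B)

def inl : A ⥤ MappingCyl h where
  obj a := ⟨false, a⟩
  map φ := ⟨𝟙 _, φ⟩
  map_id _ := Grothendieck.ext _ _ rfl (by simp)
  map_comp _ _ := Grothendieck.ext _ _ rfl (by simp)

def inr : B ⥤ MappingCyl h where
  obj b := ⟨true, b⟩
  map φ := ⟨𝟙 _, φ⟩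
  map_id _ := Grothendieck.ext _ _ rfl (by simp)
  map_comp _ _ := Grothendieck.ext _ _ rfl (by simp)

def collapse : MappingCyl h ⥤ B where
  obj
    | ⟨false, a⟩ => h.toFunctor.obj a
    | ⟨true, b⟩ => b
  map {p q} φ :=
    match p, q, φ with
    | ⟨false, _⟩, ⟨false, _⟩, φ => h.toFunctor.map φ.fiber
    | ⟨false, _⟩, ⟨true, _⟩, φ => φ.fiber
    | ⟨true, _⟩, ⟨true, _⟩, φ => φ.fiber
    | ⟨true, _⟩, ⟨false, _⟩, φ => (Bool.not_hom_true_false φ.base).elim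
  map_id p := by rcases p with ⟨_ | _, _⟩ <;> simp
  map_comp {p q r} φ ψ := by
    rcases p with ⟨_ | _, _⟩ <;> rcases q with ⟨_ | _, _⟩ <;> rcases r with ⟨_ | _, _⟩ <;>
      first
        | exact (Bool.not_hom_true_false φ.base).elim
        | exact (Bool.not_hom_true_false ψ.base).elim
        | simp

def collapseAdjunction : collapse h ⊣ inr h :=
  Adjunction.mkOfHomEquiv
    { homEquiv
        | ⟨false, _⟩, _ =>
          { toFun := fun ψ => ⟨homOfLE (Bool.false_le _), ψ⟩
            invFun := fun φ => φ.fiber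
            left_inv := fun _ => rfl
            right_inv := fun φ => Grothendieck.ext _ _ rfl (Category.id_comp _) }
        | ⟨true, _⟩, _ =>
          { toFun := fun ψ => ⟨𝟙 _, ψ⟩
            invFun := fun φ => φ.fiber
            left_inv := fun _ => rfl
            right_inv := fun φ => Grothendieck.ext _ _ rfl (Category.id_comp _) }
      homEquiv_naturality_left_symm := by
        rintro ⟨_ | _, _⟩ ⟨_ | _, _⟩ b φ χ
        all_goals first
          | exact (Bool.not_hom_true_false φ.base).elim
          | exact Category.id_comp _
      homEquiv_naturality_right := by
        rintro ⟨_ | _, _⟩ b b' ψ χ <;> exact Grothendieck.ext _ _ rfl rfl }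

end MappingCyl

namespace IsBasicLocalizer

variable {W : MorphismProperty Cat.{u, u}} {A B : Cat.{u, u}}

theorem mem_mappingCyl_collapse (hW : IsBasicLocalizer W) (h : A ⟶ B) :
    W (MappingCyl.collapse h).toCatHom :=
  have := (MappingCyl.collapseAdjunction h).isLeftAdjoint
  hW.mem_of_isLeftAdjoint_s13 _

theorem mem_mappingCyl_inr (hW : IsBasicLocalizer W) (h : A ⟶ B) :
    W (MappingCyl.inr h).toCatHom :=
  hW.weaklySaturated.of_comp_right _ _ (hW.mem_mappingCyl_collapse h)
    (hW.weaklySaturated.id_mem B)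

theorem mem_mappingCyl_inl (hW : IsBasicLocalizer W) {h : A ⟶ B} (hh : W h) :
    W (MappingCyl.inl h).toCatHom :=
  hW.weaklySaturated.of_comp_right _ _ (hW.mem_mappingCyl_collapse h) hh

end IsBasicLocalizer

namespace WideSpan

open Limits.WidePushoutShape

variable {J : Type u} {B : Cat.{u, u}} {objs : J → Cat.{u, u}} (arrows : ∀ j, B ⟶ objs j)

def legCylinder (j : J) : MappingCyl (arrows j) ⥤ Grothendieck (wideSpan B objs arrows) where
  obj
    | ⟨false, b⟩ => ⟨none, b⟩
    | ⟨true, x⟩ => ⟨some j, x⟩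
  map {p q} φ :=
    match p, q, φ with
    | ⟨false, _⟩, ⟨false, _⟩, φ => ⟨𝟙 _, φ.fiber⟩
    | ⟨false, _⟩, ⟨true, _⟩, φ => ⟨Hom.init j, φ.fiber⟩
    | ⟨true, _⟩, ⟨true, _⟩, φ => ⟨𝟙 _, φ.fiber⟩
    | ⟨true, _⟩, ⟨false, _⟩, φ => (Bool.not_hom_true_false φ.base).elim
  map_id p := by
    rcases p with ⟨_ | _, _⟩ <;> exact Grothendieck.ext _ _ rfl (Category.id_comp _)
  map_comp {p q r} φ ψ := by
    rcases p with ⟨_ | _, _⟩ <;> rcases q with ⟨_ | _, _⟩ <;> rcases r with ⟨_ | _, _⟩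
    all_goals first
      | exact (Bool.not_hom_true_false φ.base).elim
      | exact (Bool.not_hom_true_false ψ.base).elim
      | exact Grothendieck.ext _ _ rfl (Category.id_comp _)

instance (j : J) : (legCylinder arrows j).Faithful where
  map_injective {p q} {φ ψ} h := by
    rcases p with ⟨_ | _, _⟩ <;> rcases q with ⟨_ | _, _⟩
    all_goals first
      | exact (Bool.not_hom_true_false φ.base).elim
      | exact Grothendieck.ext _ _ (Subsingleton.elim _ _)
          ((Category.id_comp _).trans ((Grothendieck.congr h).trans (Category.id_comp _)))

instance (j : J) : (legCylinder arrows j).Full where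
  map_surjective {p q} ν := by
    obtain ⟨base, fiber⟩ := ν
    rcases p with ⟨_ | _, _⟩ <;> rcases q with ⟨_ | _, _⟩
    · change Hom none none at base
      cases base
      exact ⟨⟨𝟙 _, fiber⟩, Grothendieck.ext _ _ rfl (Category.id_comp _)⟩
    · change Hom none (some j) at base
      cases base
      exact ⟨⟨homOfLE (Bool.false_le _), fiber⟩, Grothendieck.ext _ _ rfl (Category.id_comp _)⟩
    · change Hom (some j) none at base
      cases base
    · change Hom (some j) (some j) at base
      cases base
      exact ⟨⟨𝟙 _, fiber⟩, Grothendieck.ext _ _ rfl (Category.id_comp _)⟩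

theorem essSurj_preLeft_legCylinder (j : J) (k : WidePushoutShape J) (hk : k ⟶ some j) :
    (Comma.preLeft (legCylinder arrows j) (Grothendieck.forget _)
      (Functor.fromPUnit.{u} k)).EssSurj where
  mem_essImage := by
    rintro ⟨⟨_ | j', a⟩, r, h⟩
    · exact ⟨⟨⟨false, a⟩, r, h⟩, ⟨Iso.refl _⟩⟩
    · change Hom (some j') k at h
      cases h
      change Hom (some j') (some j) at hk
      cases hk
      exact ⟨⟨⟨true, a⟩, r, 𝟙 _⟩, ⟨Iso.refl _⟩⟩

def legCylinderToSlice (j : J) :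
    MappingCyl (arrows j) ⥤ Comma (Grothendieck.forget (wideSpan B objs arrows))
      (Functor.fromPUnit.{u} (some j)) where
  obj p := ⟨(legCylinder arrows j).obj p, ⟨⟨⟩⟩, match p with
    | ⟨false, _⟩ => Hom.init j
    | ⟨true, _⟩ => 𝟙 _⟩
  map φ := ⟨(legCylinder arrows j).map φ, 𝟙 _, Subsingleton.elim _ _⟩
  map_id p := Comma.hom_ext _ _ ((legCylinder arrows j).map_id p) rfl
  map_comp φ ψ := Comma.hom_ext _ _ ((legCylinder arrows j).map_comp φ ψ) rfl

instance (j : J) : (legCylinderToSlice arrows j).Faithful where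
  map_injective h := (legCylinder arrows j).map_injective (congrArg CommaMorphism.left h)

instance (j : J) : (legCylinderToSlice arrows j).Full where
  map_surjective ν := ⟨(legCylinder arrows j).preimage ν.left,
    Comma.hom_ext _ _ ((legCylinder arrows j).map_preimage _) (Subsingleton.elim _ _)⟩

instance (j : J) : (legCylinderToSlice arrows j).EssSurj where
  mem_essImage := by
    rintro ⟨⟨_ | j', a⟩, ⟨⟨⟩⟩, h⟩
    · change Hom none (some j) at h
      cases h
      exact ⟨⟨false, a⟩, ⟨Iso.refl _⟩⟩
    · change Hom (some j') (some j) at h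
      cases h
      exact ⟨⟨true, a⟩, ⟨Iso.refl _⟩⟩

instance (j : J) : (legCylinderToSlice arrows j).IsEquivalence where

def apexToSlice (j j' : J) :
    B ⥤ Comma (legCylinder arrows j ⋙ Grothendieck.forget _) (Functor.fromPUnit.{u} (some j')) where
  obj b := ⟨⟨false, b⟩, ⟨⟨⟩⟩, Hom.init j'⟩
  map φ := ⟨(MappingCyl.inl (arrows j)).map φ, 𝟙 _, Subsingleton.elim _ _⟩
  map_id b := Comma.hom_ext _ _ ((MappingCyl.inl (arrows j)).map_id b) rfl
  map_comp φ ψ := Comma.hom_ext _ _ ((MappingCyl.inl (arrows j)).map_comp φ ψ) rfl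

instance (j j' : J) : (apexToSlice arrows j j').Faithful where
  map_injective h :=
    (Grothendieck.congr (congrArg CommaMorphism.left h)).trans (Category.id_comp _)

instance (j j' : J) : (apexToSlice arrows j j').Full where
  map_surjective ν := ⟨ν.left.fiber, Comma.hom_ext _ _
    (Grothendieck.ext _ _ (Subsingleton.elim _ _) (Category.id_comp _)) (Subsingleton.elim _ _)⟩

theorem isEquivalence_apexToSlice {j j' : J} (hj : j ≠ j') :
    (apexToSlice arrows j j').IsEquivalence where
  essSurj.mem_essImage := by
    rintro ⟨⟨_ | _, a⟩, ⟨⟨⟩⟩, h⟩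
    · change Hom none (some j') at h
      cases h
      exact ⟨a, ⟨Iso.refl _⟩⟩
    · change Hom (some j) (some j') at h
      cases h
      exact (hj rfl).elim

theorem apexToSlice_comp_preLeft (j j' : J) :
    (apexToSlice arrows j j').toCatHom ≫
      (Comma.preLeft (legCylinder arrows j) (Grothendieck.forget _) _).toCatHom =
      (MappingCyl.inl (arrows j')).toCatHom ≫ (legCylinderToSlice arrows j').toCatHom :=
  rfl

end WideSpan

open Limits.WidePushoutShape WideSpan in
theorem IsBasicLocalizer.mem_legCylinder {W : MorphismProperty Cat.{u, u}}
    (hW : IsBasicLocalizer W) {J : Type u} {B : Cat.{u, u}} {objs : J → Cat.{u, u}}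
    (arrows : ∀ j, B ⟶ objs j) (j : J) (harrows : ∀ j', j' ≠ j → W (arrows j')) :
    W (legCylinder arrows j).toCatHom := by
  refine hW.locality _ (Grothendieck.forget (wideSpan B objs arrows)).toCatHom
    fun (k : WidePushoutShape J) => ?_
  have below_leg : ∀ hk : k ⟶ some j, W (Comma.preLeft (legCylinder arrows j)
      (Grothendieck.forget _) (Functor.fromPUnit.{u} k)).toCatHom := fun hk =>
    have := essSurj_preLeft_legCylinder arrows j k hk
    have : (Comma.preLeft (legCylinder arrows j) (Grothendieck.forget _)
      (Functor.fromPUnit.{u} k)).IsEquivalence := {}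
    hW.mem_of_isEquivalence _
  rcases k with _ | j'
  · exact below_leg (Hom.init j)
  by_cases hj : j' = j
  · subst hj
    exact below_leg (𝟙 _)
  -- Over another leg `j'`, the comparison of slices is `inl (arrows j')` up to equivalences.
  have := isEquivalence_apexToSlice arrows (Ne.symm hj)
  refine hW.weaklySaturated.of_comp_left (apexToSlice arrows j j').toCatHom _
    (hW.mem_of_isEquivalence _) ?_
  have hcomp := hW.weaklySaturated.comp_mem _ _ (hW.mem_mappingCyl_inl (harrows j' hj))
    (hW.mem_of_isEquivalence (legCylinderToSlice arrows j'))
  rw [← apexToSlice_comp_preLeft] at hcomp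
  exact hcomp

theorem natConnected_of_span {I J : Cat.{u, u}} {a b : I ⟶ J} (c : ↥I ⥤ ↥J)
    (α : c ⟶ a.toFunctor) (β : c ⟶ b.toFunctor) : NatConnected a b :=
  .trans _ _ _ (.symm _ _ (.rel _ _ ⟨α⟩)) (.rel _ _ ⟨β⟩)

def spanObjs (X Z : Cat.{u, u}) : ULift.{u} WalkingPair → Cat.{u, u}
  | ⟨.left⟩ => X
  | ⟨.right⟩ => Z

section Span

variable {X Y Z : Cat.{u, u}}

def spanArrows (g : Y ⟶ X) (f : Y ⟶ Z) : ∀ j, Y ⟶ spanObjs X Z j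
  | ⟨.left⟩ => g
  | ⟨.right⟩ => f

abbrev spanDiagram (g : Y ⟶ X) (f : Y ⟶ Z) :
    WidePushoutShape (ULift.{u} WalkingPair) ⥤ Cat.{u, u} :=
  Limits.WidePushoutShape.wideSpan Y (spanObjs X Z) (spanArrows g f)

open Limits.WidePushoutShape WideSpan in
def apexToLeft (g : Y ⟶ X) (f : Y ⟶ Z) :
    Grothendieck.ι (spanDiagram g f) none ⟶
      g.toFunctor ⋙ MappingCyl.inr g ⋙ legCylinder (spanArrows g f) ⟨.left⟩ where
  app y := ⟨Hom.init _, 𝟙 _⟩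
  naturality y y' φ := by
    refine Grothendieck.ext _ _ (Subsingleton.elim _ _) ?_
    show 𝟙 _ ≫ 𝟙 _ ≫ g.toFunctor.map (𝟙 _ ≫ φ) ≫ 𝟙 _ = 𝟙 _ ≫ 𝟙 _ ≫ g.toFunctor.map φ
    simp only [Category.id_comp, Category.comp_id]
    exact congrArg g.toFunctor.map (Category.id_comp φ)

end Span

open Limits.WidePushoutShape WideSpan in
/-- The image of a basic localizer in `τ₁Cat` has a left calculus of fractions:
for `f : Y ⟶ Z` in `W` and `g : Y ⟶ X` arbitrary, there exist `P`, `F : X ⟶ P` in `W`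
and `G : Z ⟶ P` such that `F ∘ g` and `G ∘ f` are connected by a zig-zag of natural
transformations. -/
theorem IsBasicLocalizer.leftCalculus {W : MorphismProperty Cat.{u, u}}
    (hW : IsBasicLocalizer W) {Y Z X : Cat.{u, u}}
    (f : Y ⟶ Z) (hf : W f) (g : Y ⟶ X) :
    ∃ (P : Cat.{u, u}) (F : X ⟶ P) (G : Z ⟶ P),
      W F ∧ NatConnected (g ≫ F) (f ≫ G) := by
  refine ⟨Cat.of (Grothendieck (spanDiagram g f)),
    (MappingCyl.inr g ⋙ legCylinder (spanArrows g f) ⟨.left⟩).toCatHom,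
    (Grothendieck.ι (spanDiagram g f) (some ⟨.right⟩)).toCatHom, ?_, ?_⟩
  · refine hW.weaklySaturated.comp_mem (MappingCyl.inr g).toCatHom _ (hW.mem_mappingCyl_inr g)
      (hW.mem_legCylinder (spanArrows g f) _ ?_)
    rintro ⟨_ | _⟩ hj
    · exact (hj rfl).elim
    · exact hf
  · exact natConnected_of_span (Grothendieck.ι (spanDiagram g f) none) (apexToLeft g f)
      (Grothendieck.ιNatTrans (F := spanDiagram g f) (X := none) (Y := some ⟨.right⟩)
        (Hom.init _))
end
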